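/- (Perturbed output with Gaussian perturbation, deterministic core) Suppose each layer of a d-layer ReLU network has spectral norm ‖W_i‖₂ = β, and suppose the perturbation matrices satisfy ‖U_i‖₂ ≤ σ√(2h ln(4dh)) ≤ β/d for all i. Then for all x with |x|₂ ≤ B, |f_{w+u}(x) − f_w(x)|₂ ≤ e·d·B·β^{d−1}·σ·√(2h ln(4dh)). -/

import Mathlib

/-!
Compare the two networks layer by layer. At a layer the error splits as
`W (φ y' - φ y) + U (φ y')`: the first term propagates the previous error through a
1-Lipschitz activation and a map of norm `β`, the second is the fresh perturbation applied to
the perturbed activations, whose norm is at most `(β + s)^k ‖x‖`. Unrolling gives the error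
`k s ‖x‖ (β + s)^(k-1)`, and `s ≤ β / d` turns `(β + s)^(d-1)` into at most
`(1 + 1/d)^d β^(d-1) ≤ e β^(d-1)`.
-/

/-- Coordinatewise ReLU on vectors. -/
noncomputable def reluV {n : ℕ} (v : EuclideanSpace ℝ (Fin n)) :
    EuclideanSpace ℝ (Fin n) := WithLp.toLp 2 (fun i => max (v i) 0)

/-- `net W i x` is the output f^i(x) of layer `i` before activation (layers are
    indexed 1,…,d): f¹(x) = W₁ x, f^{i+1}(x) = W_{i+1} φ(f^i(x)); `net W 0 x = x`. -/
noncomputable def net {n : ℕ}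
    (W : ℕ → EuclideanSpace ℝ (Fin n) →L[ℝ] EuclideanSpace ℝ (Fin n)) :
    ℕ → EuclideanSpace ℝ (Fin n) → EuclideanSpace ℝ (Fin n)
  | 0, x => x
  | 1, x => W 1 x
  | (i + 2), x => W (i + 2) (reluV (net W (i + 1) x))

open Finset

lemma norm_reluV_sub_reluV_le {n : ℕ} (v w : EuclideanSpace ℝ (Fin n)) :
    ‖reluV v - reluV w‖ ≤ ‖v - w‖ := by
  rw [EuclideanSpace.norm_eq, EuclideanSpace.norm_eq]
  gcongr with i
  simpa [reluV] using abs_max_sub_max_le_abs (v i) (w i) 0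

lemma norm_reluV_le {n : ℕ} (v : EuclideanSpace ℝ (Fin n)) : ‖reluV v‖ ≤ ‖v‖ := by
  have hzero : reluV (0 : EuclideanSpace ℝ (Fin n)) = 0 := by ext i; simp [reluV]
  simpa [hzero] using norm_reluV_sub_reluV_le v 0

lemma norm_add_apply_sub_apply_le {E F : Type*} [SeminormedAddCommGroup E]
    [SeminormedAddCommGroup F] [NormedSpace ℝ E] [NormedSpace ℝ F] (A P : E →L[ℝ] F) (u' u : E) :
    ‖(A + P) u' - A u‖ ≤ ‖A‖ * ‖u' - u‖ + ‖P‖ * ‖u'‖ := by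
  have hsplit : (A + P) u' - A u = A (u' - u) + P u' := by
    rw [add_apply, map_sub]; abel
  rw [hsplit]
  exact (norm_add_le _ _).trans (add_le_add (A.le_opNorm _) (P.le_opNorm _))

section Network

variable {n : ℕ} {x : EuclideanSpace ℝ (Fin n)} {B : ℝ}

theorem norm_net_le (V : ℕ → EuclideanSpace ℝ (Fin n) →L[ℝ] EuclideanSpace ℝ (Fin n)) {c : ℝ}
    (hx : ‖x‖ ≤ B) : ∀ k, (∀ i ∈ Icc 1 k, ‖V i‖ ≤ c) → ‖net V k x‖ ≤ c ^ k * B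
  | 0, _ => by simpa [net] using hx
  | 1, hV => by
    have hc : ‖V 1‖ ≤ c := hV 1 (by simp)
    calc ‖V 1 x‖ ≤ ‖V 1‖ * ‖x‖ := (V 1).le_opNorm x
      _ ≤ c ^ 1 * B := by rw [pow_one]; gcongr; exact (norm_nonneg _).trans hc
  | k + 2, hV => by
    have hc : ‖V (k + 2)‖ ≤ c := hV (k + 2) (by simp)
    have ih := norm_net_le V hx (k + 1) fun i hi => hV i (Icc_subset_Icc_right (by omega) hi)
    calc ‖V (k + 2) (reluV (net V (k + 1) x))‖
        ≤ ‖V (k + 2)‖ * ‖reluV (net V (k + 1) x)‖ := (V (k + 2)).le_opNorm _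
      _ ≤ c * (c ^ (k + 1) * B) := by
        gcongr
        · exact (norm_nonneg _).trans hc
        · exact (norm_reluV_le _).trans ih
      _ = c ^ (k + 2) * B := by ring

theorem norm_net_add_sub_net_le
    (W U : ℕ → EuclideanSpace ℝ (Fin n) →L[ℝ] EuclideanSpace ℝ (Fin n)) {β s : ℝ}
    (hx : ‖x‖ ≤ B) : ∀ k, (∀ i ∈ Icc 1 k, ‖W i‖ ≤ β) → (∀ i ∈ Icc 1 k, ‖U i‖ ≤ s) →
      ‖net (fun i => W i + U i) k x - net W k x‖ ≤ k * s * B * (β + s) ^ (k - 1)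
  | 0, _, _ => by simp [net]
  | 1, _, hU => by
    have hs : ‖U 1‖ ≤ s := hU 1 (by simp)
    have hdiff : (W 1 + U 1) x - W 1 x = U 1 x := by simp
    calc ‖(W 1 + U 1) x - W 1 x‖ = ‖U 1 x‖ := by rw [hdiff]
      _ ≤ ‖U 1‖ * ‖x‖ := (U 1).le_opNorm x
      _ ≤ (1 : ℕ) * s * B * (β + s) ^ (1 - 1) := by
        simp only [Nat.cast_one, one_mul, Nat.sub_self, pow_zero, mul_one]
        gcongr; exact (norm_nonneg _).trans hs
  | k + 2, hW, hU => by
    have hβ : ‖W (k + 2)‖ ≤ β := hW (k + 2) (by simp)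
    have hs : ‖U (k + 2)‖ ≤ s := hU (k + 2) (by simp)
    have hs0 : 0 ≤ s := (norm_nonneg _).trans hs
    have hβ0 : 0 ≤ β := (norm_nonneg _).trans hβ
    have hB0 : 0 ≤ B := (norm_nonneg _).trans hx
    have hsub : Icc 1 (k + 1) ⊆ Icc 1 (k + 2) := Icc_subset_Icc_right (by omega)
    set y' := net (fun i => W i + U i) (k + 1) x
    set y := net W (k + 1) x
    have herr : ‖y' - y‖ ≤ (k + 1 : ℕ) * s * B * (β + s) ^ k :=
      norm_net_add_sub_net_le W U hx (k + 1) (fun i hi => hW i (hsub hi))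
        (fun i hi => hU i (hsub hi))
    have hgrowth : ‖y'‖ ≤ (β + s) ^ (k + 1) * B :=
      norm_net_le _ hx (k + 1) fun i hi =>
        (norm_add_le _ _).trans (add_le_add (hW i (hsub hi)) (hU i (hsub hi)))
    calc ‖(W (k + 2) + U (k + 2)) (reluV y') - W (k + 2) (reluV y)‖
        ≤ ‖W (k + 2)‖ * ‖reluV y' - reluV y‖ + ‖U (k + 2)‖ * ‖reluV y'‖ :=
          norm_add_apply_sub_apply_le _ _ _ _
      _ ≤ (β + s) * ((k + 1 : ℕ) * s * B * (β + s) ^ k) + s * ((β + s) ^ (k + 1) * B) := by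
        gcongr
        · exact hβ.trans (le_add_of_nonneg_right hs0)
        · exact (norm_reluV_sub_reluV_le _ _).trans herr
        · exact (norm_reluV_le _).trans hgrowth
      _ = (k + 2 : ℕ) * s * B * (β + s) ^ (k + 2 - 1) := by
        rw [show k + 2 - 1 = k + 1 by omega]; push_cast; ring

end Network

lemma add_pow_pred_le_exp_one_mul_pow {β s : ℝ} {d : ℕ} (hβ : 0 ≤ β) (hs : 0 ≤ s)
    (hsd : s ≤ β / d) : (β + s) ^ (d - 1) ≤ Real.exp 1 * β ^ (d - 1) := by
  have hone : 1 ≤ 1 + (d : ℝ)⁻¹ := le_add_of_nonneg_right (by positivity)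
  calc (β + s) ^ (d - 1) ≤ (β * (1 + (d : ℝ)⁻¹)) ^ (d - 1) := by
        gcongr
        rwa [mul_add, mul_one, ← div_eq_mul_inv, add_le_add_iff_left]
    _ = (1 + (d : ℝ)⁻¹) ^ (d - 1) * β ^ (d - 1) := by rw [mul_pow, mul_comm]
    _ ≤ (1 + (d : ℝ)⁻¹) ^ d * β ^ (d - 1) := by
        gcongr
        exact Nat.sub_le d 1
    _ ≤ Real.exp 1 * β ^ (d - 1) := by gcongr; exact Real.one_add_inv_pow_le_exp

theorem perturbed_output_gaussian_core_general (n d h : ℕ)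
    (B σ β : ℝ) (hσ : 0 < σ) (hβ : 0 < β)
    (W U : ℕ → EuclideanSpace ℝ (Fin n) →L[ℝ] EuclideanSpace ℝ (Fin n))
    (hW : ∀ i ∈ Finset.Icc 1 d, ‖W i‖ = β)
    (hU : ∀ i ∈ Finset.Icc 1 d,
      ‖U i‖ ≤ σ * Real.sqrt (2 * h * Real.log (4 * d * h)))
    (hgrid : σ * Real.sqrt (2 * h * Real.log (4 * d * h)) ≤ β / d)
    (x : EuclideanSpace ℝ (Fin n)) (hx : ‖x‖ ≤ B) :
    ‖net (fun i => W i + U i) d x - net W d x‖ ≤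
      Real.exp 1 * d * B * β ^ (d - 1) * σ *
        Real.sqrt (2 * h * Real.log (4 * d * h)) := by
  set s := σ * Real.sqrt (2 * h * Real.log (4 * d * h)) with hs_def
  have hs : 0 ≤ s := mul_nonneg hσ.le (Real.sqrt_nonneg _)
  calc ‖net (fun i => W i + U i) d x - net W d x‖ ≤ d * s * B * (β + s) ^ (d - 1) :=
        norm_net_add_sub_net_le W U hx d (fun i hi => (hW i hi).le) hU
    _ ≤ d * s * B * (Real.exp 1 * β ^ (d - 1)) := by
        have hB0 : 0 ≤ B := (norm_nonneg x).trans hx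
        gcongr
        exact add_pow_pred_le_exp_one_mul_pow hβ.le hs hgrid
    _ = Real.exp 1 * d * B * β ^ (d - 1) * σ * Real.sqrt (2 * h * Real.log (4 * d * h)) := by
        rw [hs_def]; ring

/-- Perturbed output with Gaussian perturbation, deterministic core:
    if each layer has spectral norm ‖W_i‖₂ = β and the perturbations satisfy
    ‖U_i‖₂ ≤ σ√(2h ln(4dh)) ≤ β/d, then for |x|₂ ≤ B,
    |f_{w+u}(x) − f_w(x)|₂ ≤ e·d·B·β^{d−1}·σ·√(2h ln(4dh)). -/
theorem perturbed_output_gaussian_core (n d h : ℕ) (hd : 1 ≤ d) (hh : 1 ≤ h)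
    (B σ β : ℝ) (hB : 0 < B) (hσ : 0 < σ) (hβ : 0 < β)
    (W U : ℕ → EuclideanSpace ℝ (Fin n) →L[ℝ] EuclideanSpace ℝ (Fin n))
    (hW : ∀ i ∈ Finset.Icc 1 d, ‖W i‖ = β)
    (hU : ∀ i ∈ Finset.Icc 1 d,
      ‖U i‖ ≤ σ * Real.sqrt (2 * h * Real.log (4 * d * h)))
    (hgrid : σ * Real.sqrt (2 * h * Real.log (4 * d * h)) ≤ β / d)
    (x : EuclideanSpace ℝ (Fin n)) (hx : ‖x‖ ≤ B) :
    ‖net (fun i => W i + U i) d x - net W d x‖ ≤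
      Real.exp 1 * d * B * β ^ (d - 1) * σ *
        Real.sqrt (2 * h * Real.log (4 * d * h)) :=
  perturbed_output_gaussian_core_general n d h B σ β hσ hβ W U hW hU hgrid x hx
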